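/- arXiv:2209.11938 — 2 statements merged into one kernel-verified Lean document; each statement's English description precedes it below -/
import Mathlib

section
/- For every v ∈ F there exist exactly 6 unordered pairs {a,b} of distinct elements of L with a + b = v; every such pair automatically satisfies ⟨a,b⟩ = 1, and the 12 elements of L occurring in these 6 pairs are pairwise distinct. -/
/-- The lattice ℤ⁸. -/
abbrev V : Type := Fin 8 → ℤ

/-- The bilinear form with Gram matrix diag(1,−1,…,−1). -/
def B (v w : V) : ℤ := v 0 * w 0 - ∑ i : Fin 7, v i.succ * w i.succ

/-- The class h = (3,−1,…,−1) with ⟨h,h⟩ = 2. -/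
def hh : V := ![3, -1, -1, -1, -1, -1, -1, -1]

/-- The involution ι(v) = ⟨v,h⟩·h − v. -/
def iota (v : V) : V := B v hh • hh - v

/-- L = {v : ⟨v,v⟩ = −1, ⟨v,h⟩ = 1}. -/
def L : Set V := {v | B v v = -1 ∧ B v hh = 1}

/-- F = {v : ⟨v,v⟩ = 0, ⟨v,h⟩ = 2}. -/
def F : Set V := {v | B v v = 0 ∧ B v hh = 2}

/-- L̄ = L/⟨ι⟩, realized as the set of ι-orbits. -/
def Lbar : Set (Set V) := {p | ∃ v ∈ L, p = {v, iota v}}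

/-- F̄ = F/⟨ι⟩, realized as the set of ι-orbits. -/
def Fbar : Set (Set V) := {p | ∃ v ∈ F, p = {v, iota v}}

/-- G = {g ∈ GL₈(ℤ) : g preserves B and g(h) = h}. -/
def G : Subgroup (V ≃ₗ[ℤ] V) where
  carrier := {g | (∀ v w : V, B (g v) (g w) = B v w) ∧ g hh = hh}
  one_mem' := ⟨fun _ _ => rfl, rfl⟩
  mul_mem' := by
    rintro a b ⟨ha1, ha2⟩ ⟨hb1, hb2⟩
    refine ⟨fun v w => ?_, ?_⟩
    · show B (a (b v)) (a (b w)) = B v w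
      rw [ha1, hb1]
    · show a (b hh) = hh
      rw [hb2, ha2]
  inv_mem' := by
    rintro a ⟨ha1, ha2⟩
    refine ⟨fun v w => ?_, ?_⟩
    · show B (a.symm v) (a.symm w) = B v w
      conv_rhs => rw [← a.apply_symm_apply v, ← a.apply_symm_apply w]
      rw [ha1]
    · show a.symm hh = hh
      conv_lhs => rw [← ha2]
      exact a.symm_apply_apply hh



set_option maxRecDepth 100000
set_option synthInstance.maxSize 4096
set_option synthInstance.maxHeartbeats 1000000

lemma Bexpl (v w : V) : B v w = v 0 * w 0 - (v 1 * w 1 + v 2 * w 2 + v 3 * w 3 + v 4 * w 4 + v 5 * w 5 + v 6 * w 6 + v 7 * w 7) := by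
  show _ = _
  rw [B, Fin.sum_univ_seven]
  rfl

lemma Bh (v : V) : B v hh = 3 * v 0 + v 1 + v 2 + v 3 + v 4 + v 5 + v 6 + v 7 := by
  rw [Bexpl]
  show v 0 * 3 - (v 1 * (-1) + v 2 * (-1) + v 3 * (-1) + v 4 * (-1) + v 5 * (-1) + v 6 * (-1) + v 7 * (-1)) = _
  ring

lemma Badd (a b : V) : B (a + b) (a + b) = B a a + 2 * B a b + B b b := by
  rw [Bexpl, Bexpl, Bexpl, Bexpl]
  simp only [Pi.add_apply]
  ring

lemma Bsub (v a : V) : B (v - a) (v - a) = B v v - 2 * B a v + B a a := by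
  rw [Bexpl, Bexpl, Bexpl, Bexpl]
  simp only [Pi.sub_apply]
  ring

lemma Bsubh (v a : V) : B (v - a) hh = B v hh - B a hh := by
  rw [Bh, Bh, Bh]
  simp only [Pi.sub_apply]
  ring

abbrev T : Type := ℤ×ℤ×ℤ×ℤ×ℤ×ℤ×ℤ×ℤ
def tup (v : V) : T := (v 0, v 1, v 2, v 3, v 4, v 5, v 6, v 7)
def fromTup (t : T) : V :=
  ![t.1, t.2.1, t.2.2.1, t.2.2.2.1, t.2.2.2.2.1, t.2.2.2.2.2.1, t.2.2.2.2.2.2.1, t.2.2.2.2.2.2.2]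

lemma tup_fromTup (t : T) : tup (fromTup t) = t := rfl

lemma fromTup_tup (v : V) : fromTup (tup v) = v := by
  funext i
  fin_cases i <;> rfl

lemma fromTup_inj : Function.Injective fromTup := by
  intro a b h
  have := congrArg tup h
  rwa [tup_fromTup, tup_fromTup] at this

def Bt (t u : T) : ℤ := t.1 * u.1 - (t.2.1 * u.2.1 + t.2.2.1 * u.2.2.1 + t.2.2.2.1 * u.2.2.2.1 +
  t.2.2.2.2.1 * u.2.2.2.2.1 + t.2.2.2.2.2.1 * u.2.2.2.2.2.1 + t.2.2.2.2.2.2.1 * u.2.2.2.2.2.2.1 +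
  t.2.2.2.2.2.2.2 * u.2.2.2.2.2.2.2)

lemma Btc (a v : V) : Bt (tup a) (tup v) = B a v := by
  rw [Bexpl]
  rfl

set_option maxHeartbeats 1600000 in
def Llist : List T := [(0,0,0,0,0,0,0,1),
(0,0,0,0,0,0,1,0),
(0,0,0,0,0,1,0,0),
(0,0,0,0,1,0,0,0),
(0,0,0,1,0,0,0,0),
(0,0,1,0,0,0,0,0),
(0,1,0,0,0,0,0,0),
(1,-1,-1,0,0,0,0,0),
(1,-1,0,-1,0,0,0,0),
(1,-1,0,0,-1,0,0,0),
(1,-1,0,0,0,-1,0,0),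
(1,-1,0,0,0,0,-1,0),
(1,-1,0,0,0,0,0,-1),
(1,0,-1,-1,0,0,0,0),
(1,0,-1,0,-1,0,0,0),
(1,0,-1,0,0,-1,0,0),
(1,0,-1,0,0,0,-1,0),
(1,0,-1,0,0,0,0,-1),
(1,0,0,-1,-1,0,0,0),
(1,0,0,-1,0,-1,0,0),
(1,0,0,-1,0,0,-1,0),
(1,0,0,-1,0,0,0,-1),
(1,0,0,0,-1,-1,0,0),
(1,0,0,0,-1,0,-1,0),
(1,0,0,0,-1,0,0,-1),
(1,0,0,0,0,-1,-1,0),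
(1,0,0,0,0,-1,0,-1),
(1,0,0,0,0,0,-1,-1),
(2,-1,-1,-1,-1,-1,0,0),
(2,-1,-1,-1,-1,0,-1,0),
(2,-1,-1,-1,-1,0,0,-1),
(2,-1,-1,-1,0,-1,-1,0),
(2,-1,-1,-1,0,-1,0,-1),
(2,-1,-1,-1,0,0,-1,-1),
(2,-1,-1,0,-1,-1,-1,0),
(2,-1,-1,0,-1,-1,0,-1),
(2,-1,-1,0,-1,0,-1,-1),
(2,-1,-1,0,0,-1,-1,-1),
(2,-1,0,-1,-1,-1,-1,0),
(2,-1,0,-1,-1,-1,0,-1),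
(2,-1,0,-1,-1,0,-1,-1),
(2,-1,0,-1,0,-1,-1,-1),
(2,-1,0,0,-1,-1,-1,-1),
(2,0,-1,-1,-1,-1,-1,0),
(2,0,-1,-1,-1,-1,0,-1),
(2,0,-1,-1,-1,0,-1,-1),
(2,0,-1,-1,0,-1,-1,-1),
(2,0,-1,0,-1,-1,-1,-1),
(2,0,0,-1,-1,-1,-1,-1),
(3,-2,-1,-1,-1,-1,-1,-1),
(3,-1,-2,-1,-1,-1,-1,-1),
(3,-1,-1,-2,-1,-1,-1,-1),
(3,-1,-1,-1,-2,-1,-1,-1),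
(3,-1,-1,-1,-1,-2,-1,-1),
(3,-1,-1,-1,-1,-1,-2,-1),
(3,-1,-1,-1,-1,-1,-1,-2)]

set_option maxHeartbeats 1600000 in
def Flist123 : List T := [(1,-1,0,0,0,0,0,0),
(1,0,-1,0,0,0,0,0),
(1,0,0,-1,0,0,0,0),
(1,0,0,0,-1,0,0,0),
(1,0,0,0,0,-1,0,0),
(1,0,0,0,0,0,-1,0),
(1,0,0,0,0,0,0,-1),
(2,-1,-1,-1,-1,0,0,0),
(2,-1,-1,-1,0,-1,0,0),
(2,-1,-1,-1,0,0,-1,0),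
(2,-1,-1,-1,0,0,0,-1),
(2,-1,-1,0,-1,-1,0,0),
(2,-1,-1,0,-1,0,-1,0),
(2,-1,-1,0,-1,0,0,-1),
(2,-1,-1,0,0,-1,-1,0),
(2,-1,-1,0,0,-1,0,-1),
(2,-1,-1,0,0,0,-1,-1),
(2,-1,0,-1,-1,-1,0,0),
(2,-1,0,-1,-1,0,-1,0),
(2,-1,0,-1,-1,0,0,-1),
(2,-1,0,-1,0,-1,-1,0),
(2,-1,0,-1,0,-1,0,-1),
(2,-1,0,-1,0,0,-1,-1),
(2,-1,0,0,-1,-1,-1,0),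
(2,-1,0,0,-1,-1,0,-1),
(2,-1,0,0,-1,0,-1,-1),
(2,-1,0,0,0,-1,-1,-1),
(2,0,-1,-1,-1,-1,0,0),
(2,0,-1,-1,-1,0,-1,0),
(2,0,-1,-1,-1,0,0,-1),
(2,0,-1,-1,0,-1,-1,0),
(2,0,-1,-1,0,-1,0,-1),
(2,0,-1,-1,0,0,-1,-1),
(2,0,-1,0,-1,-1,-1,0),
(2,0,-1,0,-1,-1,0,-1),
(2,0,-1,0,-1,0,-1,-1),
(2,0,-1,0,0,-1,-1,-1),
(2,0,0,-1,-1,-1,-1,0),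
(2,0,0,-1,-1,-1,0,-1),
(2,0,0,-1,-1,0,-1,-1),
(2,0,0,-1,0,-1,-1,-1),
(2,0,0,0,-1,-1,-1,-1),
(3,-2,-1,-1,-1,-1,-1,0),
(3,-2,-1,-1,-1,-1,0,-1),
(3,-2,-1,-1,-1,0,-1,-1),
(3,-2,-1,-1,0,-1,-1,-1),
(3,-2,-1,0,-1,-1,-1,-1),
(3,-2,0,-1,-1,-1,-1,-1),
(3,-1,-2,-1,-1,-1,-1,0),
(3,-1,-2,-1,-1,-1,0,-1),
(3,-1,-2,-1,-1,0,-1,-1),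
(3,-1,-2,-1,0,-1,-1,-1),
(3,-1,-2,0,-1,-1,-1,-1),
(3,-1,-1,-2,-1,-1,-1,0),
(3,-1,-1,-2,-1,-1,0,-1),
(3,-1,-1,-2,-1,0,-1,-1),
(3,-1,-1,-2,0,-1,-1,-1),
(3,-1,-1,-1,-2,-1,-1,0),
(3,-1,-1,-1,-2,-1,0,-1),
(3,-1,-1,-1,-2,0,-1,-1),
(3,-1,-1,-1,-1,-2,-1,0),
(3,-1,-1,-1,-1,-2,0,-1),
(3,-1,-1,-1,-1,-1,-2,0),
(3,-1,-1,-1,-1,-1,0,-2),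
(3,-1,-1,-1,-1,0,-2,-1),
(3,-1,-1,-1,-1,0,-1,-2),
(3,-1,-1,-1,0,-2,-1,-1),
(3,-1,-1,-1,0,-1,-2,-1),
(3,-1,-1,-1,0,-1,-1,-2),
(3,-1,-1,0,-2,-1,-1,-1),
(3,-1,-1,0,-1,-2,-1,-1),
(3,-1,-1,0,-1,-1,-2,-1),
(3,-1,-1,0,-1,-1,-1,-2),
(3,-1,0,-2,-1,-1,-1,-1),
(3,-1,0,-1,-2,-1,-1,-1),
(3,-1,0,-1,-1,-2,-1,-1),
(3,-1,0,-1,-1,-1,-2,-1),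
(3,-1,0,-1,-1,-1,-1,-2),
(3,0,-2,-1,-1,-1,-1,-1),
(3,0,-1,-2,-1,-1,-1,-1),
(3,0,-1,-1,-2,-1,-1,-1),
(3,0,-1,-1,-1,-2,-1,-1),
(3,0,-1,-1,-1,-1,-2,-1),
(3,0,-1,-1,-1,-1,-1,-2)]

set_option maxHeartbeats 1600000 in
def Flist : List T := Flist123 ++ [(4,-2,-2,-2,-1,-1,-1,-1),
(4,-2,-2,-1,-2,-1,-1,-1),
(4,-2,-2,-1,-1,-2,-1,-1),
(4,-2,-2,-1,-1,-1,-2,-1),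
(4,-2,-2,-1,-1,-1,-1,-2),
(4,-2,-1,-2,-2,-1,-1,-1),
(4,-2,-1,-2,-1,-2,-1,-1),
(4,-2,-1,-2,-1,-1,-2,-1),
(4,-2,-1,-2,-1,-1,-1,-2),
(4,-2,-1,-1,-2,-2,-1,-1),
(4,-2,-1,-1,-2,-1,-2,-1),
(4,-2,-1,-1,-2,-1,-1,-2),
(4,-2,-1,-1,-1,-2,-2,-1),
(4,-2,-1,-1,-1,-2,-1,-2),
(4,-2,-1,-1,-1,-1,-2,-2),
(4,-1,-2,-2,-2,-1,-1,-1),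
(4,-1,-2,-2,-1,-2,-1,-1),
(4,-1,-2,-2,-1,-1,-2,-1),
(4,-1,-2,-2,-1,-1,-1,-2),
(4,-1,-2,-1,-2,-2,-1,-1),
(4,-1,-2,-1,-2,-1,-2,-1),
(4,-1,-2,-1,-2,-1,-1,-2),
(4,-1,-2,-1,-1,-2,-2,-1),
(4,-1,-2,-1,-1,-2,-1,-2),
(4,-1,-2,-1,-1,-1,-2,-2),
(4,-1,-1,-2,-2,-2,-1,-1),
(4,-1,-1,-2,-2,-1,-2,-1),
(4,-1,-1,-2,-2,-1,-1,-2),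
(4,-1,-1,-2,-1,-2,-2,-1),
(4,-1,-1,-2,-1,-2,-1,-2),
(4,-1,-1,-2,-1,-1,-2,-2),
(4,-1,-1,-1,-2,-2,-2,-1),
(4,-1,-1,-1,-2,-2,-1,-2),
(4,-1,-1,-1,-2,-1,-2,-2),
(4,-1,-1,-1,-1,-2,-2,-2),
(5,-2,-2,-2,-2,-2,-2,-1),
(5,-2,-2,-2,-2,-2,-1,-2),
(5,-2,-2,-2,-2,-1,-2,-2),
(5,-2,-2,-2,-1,-2,-2,-2),
(5,-2,-2,-1,-2,-2,-2,-2),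
(5,-2,-1,-2,-2,-2,-2,-2),
(5,-1,-2,-2,-2,-2,-2,-2)]

lemma qnn (x : ℤ) : 0 ≤ x * x + x := by
  rcases le_or_gt 0 x with h | h
  · positivity
  · nlinarith

lemma qle0 (x : ℤ) (h : x * x + x ≤ 0) : x = 0 ∨ x = -1 := by
  have h0 := qnn x
  have : x * (x + 1) = 0 := by nlinarith
  rcases mul_eq_zero.mp this with h' | h'
  · left; exact h'
  · right; linarith

lemma qle2 (x : ℤ) (h : x * x + x ≤ 2) : x = 0 ∨ x = -1 ∨ x = 1 ∨ x = -2 := by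
  have key : (x - 1) * (x + 2) ≤ 0 := by nlinarith
  rcases mul_nonpos_iff.mp key with ⟨h1, h2⟩ | ⟨h1, h2⟩ <;> omega

lemma v0L (x : ℤ) : (x = 0 ∧ x*x = 0) ∨ (x = 1 ∧ x*x = 1) ∨ (x = 2 ∧ x*x = 4) ∨ (x = 3 ∧ x*x = 9) ∨ x*x ≥ 3*x + 4 := by
  rcases le_or_gt x (-1) with h | h
  · right; right; right; right; nlinarith
  rcases le_or_gt 4 x with h' | h'
  · right; right; right; right; nlinarith
  interval_cases x <;> simp

lemma v0F (x : ℤ) : (x = 1 ∧ x*x = 1) ∨ (x = 2 ∧ x*x = 4) ∨ (x = 3 ∧ x*x = 9) ∨ (x = 4 ∧ x*x = 16) ∨ (x = 5 ∧ x*x = 25) ∨ x*x ≥ 6*x - 1 := by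
  rcases le_or_gt x 0 with h | h
  · right; right; right; right; right; nlinarith
  rcases le_or_gt 6 x with h' | h'
  · right; right; right; right; right; nlinarith
  interval_cases x <;> simp

def xm4 : Fin 4 → ℤ := ![0,-1,1,-2]
def sm4 : Fin 4 → ℤ := ![0,1,1,4]
def enc4 (x : ℤ) : Fin 4 := if x = -1 then 1 else if x = 1 then 2 else if x = -2 then 3 else 0
def xm2 : Fin 2 → ℤ := ![0,-1]
def sm2 : Fin 2 → ℤ := ![0,1]
def enc2 (x : ℤ) : Fin 2 := if x = -1 then 1 else 0

lemma enc4_spec (x : ℤ) (h : x * x + x ≤ 2) : x = xm4 (enc4 x) ∧ x * x = sm4 (enc4 x) := by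
  rcases qle2 x h with h' | h' | h' | h' <;> rw [h'] <;> exact ⟨by decide, by decide⟩

lemma enc2_spec (x : ℤ) (h : x * x + x ≤ 0) : x = xm2 (enc2 x) ∧ x * x = sm2 (enc2 x) := by
  rcases qle0 x h with h' | h' <;> rw [h'] <;> exact ⟨by decide, by decide⟩

set_option maxHeartbeats 8000000 in
lemma DL0 : ∀ (b1 : Fin 4) (b2 : Fin 4) (b3 : Fin 4) (b4 : Fin 4) (b5 : Fin 4) (b6 : Fin 4) (b7 : Fin 4), (xm4 b1 + xm4 b2 + xm4 b3 + xm4 b4 + xm4 b5 + xm4 b6 + xm4 b7 = 1) → (sm4 b1 + sm4 b2 + sm4 b3 + sm4 b4 + sm4 b5 + sm4 b6 + sm4 b7 = 1) → ((0:ℤ), xm4 b1, xm4 b2, xm4 b3, xm4 b4, xm4 b5, xm4 b6, xm4 b7) ∈ Llist := by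
  decide

set_option maxHeartbeats 8000000 in
lemma DL1 : ∀ (b1 : Fin 2) (b2 : Fin 2) (b3 : Fin 2) (b4 : Fin 2) (b5 : Fin 2) (b6 : Fin 2) (b7 : Fin 2), (xm2 b1 + xm2 b2 + xm2 b3 + xm2 b4 + xm2 b5 + xm2 b6 + xm2 b7 = -2) → (sm2 b1 + sm2 b2 + sm2 b3 + sm2 b4 + sm2 b5 + sm2 b6 + sm2 b7 = 2) → ((1:ℤ), xm2 b1, xm2 b2, xm2 b3, xm2 b4, xm2 b5, xm2 b6, xm2 b7) ∈ Llist := by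
  decide

set_option maxHeartbeats 8000000 in
lemma DL2 : ∀ (b1 : Fin 2) (b2 : Fin 2) (b3 : Fin 2) (b4 : Fin 2) (b5 : Fin 2) (b6 : Fin 2) (b7 : Fin 2), (xm2 b1 + xm2 b2 + xm2 b3 + xm2 b4 + xm2 b5 + xm2 b6 + xm2 b7 = -5) → (sm2 b1 + sm2 b2 + sm2 b3 + sm2 b4 + sm2 b5 + sm2 b6 + sm2 b7 = 5) → ((2:ℤ), xm2 b1, xm2 b2, xm2 b3, xm2 b4, xm2 b5, xm2 b6, xm2 b7) ∈ Llist := by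
  decide

set_option maxHeartbeats 8000000 in
lemma DL3 : ∀ (b1 : Fin 4) (b2 : Fin 4) (b3 : Fin 4) (b4 : Fin 4) (b5 : Fin 4) (b6 : Fin 4) (b7 : Fin 4), (xm4 b1 + xm4 b2 + xm4 b3 + xm4 b4 + xm4 b5 + xm4 b6 + xm4 b7 = -8) → (sm4 b1 + sm4 b2 + sm4 b3 + sm4 b4 + sm4 b5 + sm4 b6 + sm4 b7 = 10) → ((3:ℤ), xm4 b1, xm4 b2, xm4 b3, xm4 b4, xm4 b5, xm4 b6, xm4 b7) ∈ Llist := by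
  decide

set_option maxHeartbeats 8000000 in
lemma DF1 : ∀ (b1 : Fin 2) (b2 : Fin 2) (b3 : Fin 2) (b4 : Fin 2) (b5 : Fin 2) (b6 : Fin 2) (b7 : Fin 2), (xm2 b1 + xm2 b2 + xm2 b3 + xm2 b4 + xm2 b5 + xm2 b6 + xm2 b7 = -1) → (sm2 b1 + sm2 b2 + sm2 b3 + sm2 b4 + sm2 b5 + sm2 b6 + sm2 b7 = 1) → ((1:ℤ), xm2 b1, xm2 b2, xm2 b3, xm2 b4, xm2 b5, xm2 b6, xm2 b7) ∈ Flist123 := by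
  decide

set_option maxHeartbeats 8000000 in
lemma DF2 : ∀ (b1 : Fin 2) (b2 : Fin 2) (b3 : Fin 2) (b4 : Fin 2) (b5 : Fin 2) (b6 : Fin 2) (b7 : Fin 2), (xm2 b1 + xm2 b2 + xm2 b3 + xm2 b4 + xm2 b5 + xm2 b6 + xm2 b7 = -4) → (sm2 b1 + sm2 b2 + sm2 b3 + sm2 b4 + sm2 b5 + sm2 b6 + sm2 b7 = 4) → ((2:ℤ), xm2 b1, xm2 b2, xm2 b3, xm2 b4, xm2 b5, xm2 b6, xm2 b7) ∈ Flist123 := by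
  decide

set_option maxHeartbeats 8000000 in
lemma DF3 : ∀ (b1 : Fin 4) (b2 : Fin 4) (b3 : Fin 4) (b4 : Fin 4) (b5 : Fin 4) (b6 : Fin 4) (b7 : Fin 4), (xm4 b1 + xm4 b2 + xm4 b3 + xm4 b4 + xm4 b5 + xm4 b6 + xm4 b7 = -7) → (sm4 b1 + sm4 b2 + sm4 b3 + sm4 b4 + sm4 b5 + sm4 b6 + sm4 b7 = 9) → ((3:ℤ), xm4 b1, xm4 b2, xm4 b3, xm4 b4, xm4 b5, xm4 b6, xm4 b7) ∈ Flist123 := by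
  decide


set_option maxHeartbeats 1600000 in
lemma structL (v : V) (hL : v ∈ L) : tup v ∈ Llist := by
  obtain ⟨h1, h2⟩ := hL
  rw [Bexpl] at h1
  rw [Bh] at h2
  have hd2 : (v 1 + v 2 + v 3 + v 4 + v 5 + v 6 + v 7) * (v 1 + v 2 + v 3 + v 4 + v 5 + v 6 + v 7) = (1 - 3 * v 0) * (1 - 3 * v 0) := by
    have e : v 1 + v 2 + v 3 + v 4 + v 5 + v 6 + v 7 = 1 - 3 * v 0 := by linarith
    rw [e]
  have hcs : v 0 * v 0 ≤ 3 * v 0 + 3 := by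
    linarith [sq_nonneg (v 1 - v 2), sq_nonneg (v 1 - v 3), sq_nonneg (v 1 - v 4), sq_nonneg (v 1 - v 5), sq_nonneg (v 1 - v 6), sq_nonneg (v 1 - v 7), sq_nonneg (v 2 - v 3), sq_nonneg (v 2 - v 4), sq_nonneg (v 2 - v 5), sq_nonneg (v 2 - v 6), sq_nonneg (v 2 - v 7), sq_nonneg (v 3 - v 4), sq_nonneg (v 3 - v 5), sq_nonneg (v 3 - v 6), sq_nonneg (v 3 - v 7), sq_nonneg (v 4 - v 5), sq_nonneg (v 4 - v 6), sq_nonneg (v 4 - v 7), sq_nonneg (v 5 - v 6), sq_nonneg (v 5 - v 7), sq_nonneg (v 6 - v 7), hd2, h1]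
  rcases v0L (v 0) with ⟨hx0, hs0⟩ | ⟨hx0, hs0⟩ | ⟨hx0, hs0⟩ | ⟨hx0, hs0⟩ | hbig
  · rw [hs0] at h1
    rw [hx0] at h2
    have hs : v 1 * v 1 + v 2 * v 2 + v 3 * v 3 + v 4 * v 4 + v 5 * v 5 + v 6 * v 6 + v 7 * v 7 = 1 := by linarith
    have hx : v 1 + v 2 + v 3 + v 4 + v 5 + v 6 + v 7 = 1 := by linarith
    clear h1 h2 hd2 hcs hs0
    have hb1 : v 1 * v 1 + v 1 ≤ 2 := by linarith [qnn (v 2), qnn (v 3), qnn (v 4), qnn (v 5), qnn (v 6), qnn (v 7)]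
    have hb2 : v 2 * v 2 + v 2 ≤ 2 := by linarith [qnn (v 1), qnn (v 3), qnn (v 4), qnn (v 5), qnn (v 6), qnn (v 7)]
    have hb3 : v 3 * v 3 + v 3 ≤ 2 := by linarith [qnn (v 1), qnn (v 2), qnn (v 4), qnn (v 5), qnn (v 6), qnn (v 7)]
    have hb4 : v 4 * v 4 + v 4 ≤ 2 := by linarith [qnn (v 1), qnn (v 2), qnn (v 3), qnn (v 5), qnn (v 6), qnn (v 7)]
    have hb5 : v 5 * v 5 + v 5 ≤ 2 := by linarith [qnn (v 1), qnn (v 2), qnn (v 3), qnn (v 4), qnn (v 6), qnn (v 7)]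
    have hb6 : v 6 * v 6 + v 6 ≤ 2 := by linarith [qnn (v 1), qnn (v 2), qnn (v 3), qnn (v 4), qnn (v 5), qnn (v 7)]
    have hb7 : v 7 * v 7 + v 7 ≤ 2 := by linarith [qnn (v 1), qnn (v 2), qnn (v 3), qnn (v 4), qnn (v 5), qnn (v 6)]
    have e1 := enc4_spec (v 1) hb1
    have e2 := enc4_spec (v 2) hb2
    have e3 := enc4_spec (v 3) hb3
    have e4 := enc4_spec (v 4) hb4
    have e5 := enc4_spec (v 5) hb5
    have e6 := enc4_spec (v 6) hb6
    have e7 := enc4_spec (v 7) hb7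
    rw [e1.2, e2.2, e3.2, e4.2, e5.2, e6.2, e7.2] at hs
    rw [e1.1, e2.1, e3.1, e4.1, e5.1, e6.1, e7.1] at hx
    simp only [tup]
    rw [hx0, e1.1, e2.1, e3.1, e4.1, e5.1, e6.1, e7.1]
    exact DL0 (enc4 (v 1)) (enc4 (v 2)) (enc4 (v 3)) (enc4 (v 4)) (enc4 (v 5)) (enc4 (v 6)) (enc4 (v 7)) hx hs
  · rw [hs0] at h1
    rw [hx0] at h2
    have hs : v 1 * v 1 + v 2 * v 2 + v 3 * v 3 + v 4 * v 4 + v 5 * v 5 + v 6 * v 6 + v 7 * v 7 = 2 := by linarith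
    have hx : v 1 + v 2 + v 3 + v 4 + v 5 + v 6 + v 7 = -2 := by linarith
    clear h1 h2 hd2 hcs hs0
    have hb1 : v 1 * v 1 + v 1 ≤ 0 := by linarith [qnn (v 2), qnn (v 3), qnn (v 4), qnn (v 5), qnn (v 6), qnn (v 7)]
    have hb2 : v 2 * v 2 + v 2 ≤ 0 := by linarith [qnn (v 1), qnn (v 3), qnn (v 4), qnn (v 5), qnn (v 6), qnn (v 7)]
    have hb3 : v 3 * v 3 + v 3 ≤ 0 := by linarith [qnn (v 1), qnn (v 2), qnn (v 4), qnn (v 5), qnn (v 6), qnn (v 7)]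
    have hb4 : v 4 * v 4 + v 4 ≤ 0 := by linarith [qnn (v 1), qnn (v 2), qnn (v 3), qnn (v 5), qnn (v 6), qnn (v 7)]
    have hb5 : v 5 * v 5 + v 5 ≤ 0 := by linarith [qnn (v 1), qnn (v 2), qnn (v 3), qnn (v 4), qnn (v 6), qnn (v 7)]
    have hb6 : v 6 * v 6 + v 6 ≤ 0 := by linarith [qnn (v 1), qnn (v 2), qnn (v 3), qnn (v 4), qnn (v 5), qnn (v 7)]
    have hb7 : v 7 * v 7 + v 7 ≤ 0 := by linarith [qnn (v 1), qnn (v 2), qnn (v 3), qnn (v 4), qnn (v 5), qnn (v 6)]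
    have e1 := enc2_spec (v 1) hb1
    have e2 := enc2_spec (v 2) hb2
    have e3 := enc2_spec (v 3) hb3
    have e4 := enc2_spec (v 4) hb4
    have e5 := enc2_spec (v 5) hb5
    have e6 := enc2_spec (v 6) hb6
    have e7 := enc2_spec (v 7) hb7
    rw [e1.2, e2.2, e3.2, e4.2, e5.2, e6.2, e7.2] at hs
    rw [e1.1, e2.1, e3.1, e4.1, e5.1, e6.1, e7.1] at hx
    simp only [tup]
    rw [hx0, e1.1, e2.1, e3.1, e4.1, e5.1, e6.1, e7.1]
    exact DL1 (enc2 (v 1)) (enc2 (v 2)) (enc2 (v 3)) (enc2 (v 4)) (enc2 (v 5)) (enc2 (v 6)) (enc2 (v 7)) hx hs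
  · rw [hs0] at h1
    rw [hx0] at h2
    have hs : v 1 * v 1 + v 2 * v 2 + v 3 * v 3 + v 4 * v 4 + v 5 * v 5 + v 6 * v 6 + v 7 * v 7 = 5 := by linarith
    have hx : v 1 + v 2 + v 3 + v 4 + v 5 + v 6 + v 7 = -5 := by linarith
    clear h1 h2 hd2 hcs hs0
    have hb1 : v 1 * v 1 + v 1 ≤ 0 := by linarith [qnn (v 2), qnn (v 3), qnn (v 4), qnn (v 5), qnn (v 6), qnn (v 7)]
    have hb2 : v 2 * v 2 + v 2 ≤ 0 := by linarith [qnn (v 1), qnn (v 3), qnn (v 4), qnn (v 5), qnn (v 6), qnn (v 7)]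
    have hb3 : v 3 * v 3 + v 3 ≤ 0 := by linarith [qnn (v 1), qnn (v 2), qnn (v 4), qnn (v 5), qnn (v 6), qnn (v 7)]
    have hb4 : v 4 * v 4 + v 4 ≤ 0 := by linarith [qnn (v 1), qnn (v 2), qnn (v 3), qnn (v 5), qnn (v 6), qnn (v 7)]
    have hb5 : v 5 * v 5 + v 5 ≤ 0 := by linarith [qnn (v 1), qnn (v 2), qnn (v 3), qnn (v 4), qnn (v 6), qnn (v 7)]
    have hb6 : v 6 * v 6 + v 6 ≤ 0 := by linarith [qnn (v 1), qnn (v 2), qnn (v 3), qnn (v 4), qnn (v 5), qnn (v 7)]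
    have hb7 : v 7 * v 7 + v 7 ≤ 0 := by linarith [qnn (v 1), qnn (v 2), qnn (v 3), qnn (v 4), qnn (v 5), qnn (v 6)]
    have e1 := enc2_spec (v 1) hb1
    have e2 := enc2_spec (v 2) hb2
    have e3 := enc2_spec (v 3) hb3
    have e4 := enc2_spec (v 4) hb4
    have e5 := enc2_spec (v 5) hb5
    have e6 := enc2_spec (v 6) hb6
    have e7 := enc2_spec (v 7) hb7
    rw [e1.2, e2.2, e3.2, e4.2, e5.2, e6.2, e7.2] at hs
    rw [e1.1, e2.1, e3.1, e4.1, e5.1, e6.1, e7.1] at hx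
    simp only [tup]
    rw [hx0, e1.1, e2.1, e3.1, e4.1, e5.1, e6.1, e7.1]
    exact DL2 (enc2 (v 1)) (enc2 (v 2)) (enc2 (v 3)) (enc2 (v 4)) (enc2 (v 5)) (enc2 (v 6)) (enc2 (v 7)) hx hs
  · rw [hs0] at h1
    rw [hx0] at h2
    have hs : v 1 * v 1 + v 2 * v 2 + v 3 * v 3 + v 4 * v 4 + v 5 * v 5 + v 6 * v 6 + v 7 * v 7 = 10 := by linarith
    have hx : v 1 + v 2 + v 3 + v 4 + v 5 + v 6 + v 7 = -8 := by linarith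
    clear h1 h2 hd2 hcs hs0
    have hb1 : v 1 * v 1 + v 1 ≤ 2 := by linarith [qnn (v 2), qnn (v 3), qnn (v 4), qnn (v 5), qnn (v 6), qnn (v 7)]
    have hb2 : v 2 * v 2 + v 2 ≤ 2 := by linarith [qnn (v 1), qnn (v 3), qnn (v 4), qnn (v 5), qnn (v 6), qnn (v 7)]
    have hb3 : v 3 * v 3 + v 3 ≤ 2 := by linarith [qnn (v 1), qnn (v 2), qnn (v 4), qnn (v 5), qnn (v 6), qnn (v 7)]
    have hb4 : v 4 * v 4 + v 4 ≤ 2 := by linarith [qnn (v 1), qnn (v 2), qnn (v 3), qnn (v 5), qnn (v 6), qnn (v 7)]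
    have hb5 : v 5 * v 5 + v 5 ≤ 2 := by linarith [qnn (v 1), qnn (v 2), qnn (v 3), qnn (v 4), qnn (v 6), qnn (v 7)]
    have hb6 : v 6 * v 6 + v 6 ≤ 2 := by linarith [qnn (v 1), qnn (v 2), qnn (v 3), qnn (v 4), qnn (v 5), qnn (v 7)]
    have hb7 : v 7 * v 7 + v 7 ≤ 2 := by linarith [qnn (v 1), qnn (v 2), qnn (v 3), qnn (v 4), qnn (v 5), qnn (v 6)]
    have e1 := enc4_spec (v 1) hb1
    have e2 := enc4_spec (v 2) hb2
    have e3 := enc4_spec (v 3) hb3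
    have e4 := enc4_spec (v 4) hb4
    have e5 := enc4_spec (v 5) hb5
    have e6 := enc4_spec (v 6) hb6
    have e7 := enc4_spec (v 7) hb7
    rw [e1.2, e2.2, e3.2, e4.2, e5.2, e6.2, e7.2] at hs
    rw [e1.1, e2.1, e3.1, e4.1, e5.1, e6.1, e7.1] at hx
    simp only [tup]
    rw [hx0, e1.1, e2.1, e3.1, e4.1, e5.1, e6.1, e7.1]
    exact DL3 (enc4 (v 1)) (enc4 (v 2)) (enc4 (v 3)) (enc4 (v 4)) (enc4 (v 5)) (enc4 (v 6)) (enc4 (v 7)) hx hs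
  · linarith

set_option maxHeartbeats 1600000 in
lemma structFcore (v : V) (hv : v ∈ F) (h3 : v 0 ≤ 3) : tup v ∈ Flist123 := by
  obtain ⟨h1, h2⟩ := hv
  rw [Bexpl] at h1
  rw [Bh] at h2
  have hd2 : (v 1 + v 2 + v 3 + v 4 + v 5 + v 6 + v 7) * (v 1 + v 2 + v 3 + v 4 + v 5 + v 6 + v 7) = (2 - 3 * v 0) * (2 - 3 * v 0) := by
    have e : v 1 + v 2 + v 3 + v 4 + v 5 + v 6 + v 7 = 2 - 3 * v 0 := by linarith
    rw [e]
  have hcs : v 0 * v 0 ≤ 6 * v 0 - 2 := by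
    linarith [sq_nonneg (v 1 - v 2), sq_nonneg (v 1 - v 3), sq_nonneg (v 1 - v 4), sq_nonneg (v 1 - v 5), sq_nonneg (v 1 - v 6), sq_nonneg (v 1 - v 7), sq_nonneg (v 2 - v 3), sq_nonneg (v 2 - v 4), sq_nonneg (v 2 - v 5), sq_nonneg (v 2 - v 6), sq_nonneg (v 2 - v 7), sq_nonneg (v 3 - v 4), sq_nonneg (v 3 - v 5), sq_nonneg (v 3 - v 6), sq_nonneg (v 3 - v 7), sq_nonneg (v 4 - v 5), sq_nonneg (v 4 - v 6), sq_nonneg (v 4 - v 7), sq_nonneg (v 5 - v 6), sq_nonneg (v 5 - v 7), sq_nonneg (v 6 - v 7), hd2, h1]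
  rcases v0F (v 0) with ⟨hx0, hs0⟩ | ⟨hx0, hs0⟩ | ⟨hx0, hs0⟩ | ⟨hx0, hs0⟩ | ⟨hx0, hs0⟩ | hbig
  · rw [hs0] at h1
    rw [hx0] at h2
    have hs : v 1 * v 1 + v 2 * v 2 + v 3 * v 3 + v 4 * v 4 + v 5 * v 5 + v 6 * v 6 + v 7 * v 7 = 1 := by linarith
    have hx : v 1 + v 2 + v 3 + v 4 + v 5 + v 6 + v 7 = -1 := by linarith
    clear h1 h2 hd2 hcs hs0
    have hb1 : v 1 * v 1 + v 1 ≤ 0 := by linarith [qnn (v 2), qnn (v 3), qnn (v 4), qnn (v 5), qnn (v 6), qnn (v 7)]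
    have hb2 : v 2 * v 2 + v 2 ≤ 0 := by linarith [qnn (v 1), qnn (v 3), qnn (v 4), qnn (v 5), qnn (v 6), qnn (v 7)]
    have hb3 : v 3 * v 3 + v 3 ≤ 0 := by linarith [qnn (v 1), qnn (v 2), qnn (v 4), qnn (v 5), qnn (v 6), qnn (v 7)]
    have hb4 : v 4 * v 4 + v 4 ≤ 0 := by linarith [qnn (v 1), qnn (v 2), qnn (v 3), qnn (v 5), qnn (v 6), qnn (v 7)]
    have hb5 : v 5 * v 5 + v 5 ≤ 0 := by linarith [qnn (v 1), qnn (v 2), qnn (v 3), qnn (v 4), qnn (v 6), qnn (v 7)]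
    have hb6 : v 6 * v 6 + v 6 ≤ 0 := by linarith [qnn (v 1), qnn (v 2), qnn (v 3), qnn (v 4), qnn (v 5), qnn (v 7)]
    have hb7 : v 7 * v 7 + v 7 ≤ 0 := by linarith [qnn (v 1), qnn (v 2), qnn (v 3), qnn (v 4), qnn (v 5), qnn (v 6)]
    have e1 := enc2_spec (v 1) hb1
    have e2 := enc2_spec (v 2) hb2
    have e3 := enc2_spec (v 3) hb3
    have e4 := enc2_spec (v 4) hb4
    have e5 := enc2_spec (v 5) hb5
    have e6 := enc2_spec (v 6) hb6
    have e7 := enc2_spec (v 7) hb7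
    rw [e1.2, e2.2, e3.2, e4.2, e5.2, e6.2, e7.2] at hs
    rw [e1.1, e2.1, e3.1, e4.1, e5.1, e6.1, e7.1] at hx
    simp only [tup]
    rw [hx0, e1.1, e2.1, e3.1, e4.1, e5.1, e6.1, e7.1]
    exact DF1 (enc2 (v 1)) (enc2 (v 2)) (enc2 (v 3)) (enc2 (v 4)) (enc2 (v 5)) (enc2 (v 6)) (enc2 (v 7)) hx hs
  · rw [hs0] at h1
    rw [hx0] at h2
    have hs : v 1 * v 1 + v 2 * v 2 + v 3 * v 3 + v 4 * v 4 + v 5 * v 5 + v 6 * v 6 + v 7 * v 7 = 4 := by linarith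
    have hx : v 1 + v 2 + v 3 + v 4 + v 5 + v 6 + v 7 = -4 := by linarith
    clear h1 h2 hd2 hcs hs0
    have hb1 : v 1 * v 1 + v 1 ≤ 0 := by linarith [qnn (v 2), qnn (v 3), qnn (v 4), qnn (v 5), qnn (v 6), qnn (v 7)]
    have hb2 : v 2 * v 2 + v 2 ≤ 0 := by linarith [qnn (v 1), qnn (v 3), qnn (v 4), qnn (v 5), qnn (v 6), qnn (v 7)]
    have hb3 : v 3 * v 3 + v 3 ≤ 0 := by linarith [qnn (v 1), qnn (v 2), qnn (v 4), qnn (v 5), qnn (v 6), qnn (v 7)]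
    have hb4 : v 4 * v 4 + v 4 ≤ 0 := by linarith [qnn (v 1), qnn (v 2), qnn (v 3), qnn (v 5), qnn (v 6), qnn (v 7)]
    have hb5 : v 5 * v 5 + v 5 ≤ 0 := by linarith [qnn (v 1), qnn (v 2), qnn (v 3), qnn (v 4), qnn (v 6), qnn (v 7)]
    have hb6 : v 6 * v 6 + v 6 ≤ 0 := by linarith [qnn (v 1), qnn (v 2), qnn (v 3), qnn (v 4), qnn (v 5), qnn (v 7)]
    have hb7 : v 7 * v 7 + v 7 ≤ 0 := by linarith [qnn (v 1), qnn (v 2), qnn (v 3), qnn (v 4), qnn (v 5), qnn (v 6)]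
    have e1 := enc2_spec (v 1) hb1
    have e2 := enc2_spec (v 2) hb2
    have e3 := enc2_spec (v 3) hb3
    have e4 := enc2_spec (v 4) hb4
    have e5 := enc2_spec (v 5) hb5
    have e6 := enc2_spec (v 6) hb6
    have e7 := enc2_spec (v 7) hb7
    rw [e1.2, e2.2, e3.2, e4.2, e5.2, e6.2, e7.2] at hs
    rw [e1.1, e2.1, e3.1, e4.1, e5.1, e6.1, e7.1] at hx
    simp only [tup]
    rw [hx0, e1.1, e2.1, e3.1, e4.1, e5.1, e6.1, e7.1]
    exact DF2 (enc2 (v 1)) (enc2 (v 2)) (enc2 (v 3)) (enc2 (v 4)) (enc2 (v 5)) (enc2 (v 6)) (enc2 (v 7)) hx hs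
  · rw [hs0] at h1
    rw [hx0] at h2
    have hs : v 1 * v 1 + v 2 * v 2 + v 3 * v 3 + v 4 * v 4 + v 5 * v 5 + v 6 * v 6 + v 7 * v 7 = 9 := by linarith
    have hx : v 1 + v 2 + v 3 + v 4 + v 5 + v 6 + v 7 = -7 := by linarith
    clear h1 h2 hd2 hcs hs0
    have hb1 : v 1 * v 1 + v 1 ≤ 2 := by linarith [qnn (v 2), qnn (v 3), qnn (v 4), qnn (v 5), qnn (v 6), qnn (v 7)]
    have hb2 : v 2 * v 2 + v 2 ≤ 2 := by linarith [qnn (v 1), qnn (v 3), qnn (v 4), qnn (v 5), qnn (v 6), qnn (v 7)]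
    have hb3 : v 3 * v 3 + v 3 ≤ 2 := by linarith [qnn (v 1), qnn (v 2), qnn (v 4), qnn (v 5), qnn (v 6), qnn (v 7)]
    have hb4 : v 4 * v 4 + v 4 ≤ 2 := by linarith [qnn (v 1), qnn (v 2), qnn (v 3), qnn (v 5), qnn (v 6), qnn (v 7)]
    have hb5 : v 5 * v 5 + v 5 ≤ 2 := by linarith [qnn (v 1), qnn (v 2), qnn (v 3), qnn (v 4), qnn (v 6), qnn (v 7)]
    have hb6 : v 6 * v 6 + v 6 ≤ 2 := by linarith [qnn (v 1), qnn (v 2), qnn (v 3), qnn (v 4), qnn (v 5), qnn (v 7)]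
    have hb7 : v 7 * v 7 + v 7 ≤ 2 := by linarith [qnn (v 1), qnn (v 2), qnn (v 3), qnn (v 4), qnn (v 5), qnn (v 6)]
    have e1 := enc4_spec (v 1) hb1
    have e2 := enc4_spec (v 2) hb2
    have e3 := enc4_spec (v 3) hb3
    have e4 := enc4_spec (v 4) hb4
    have e5 := enc4_spec (v 5) hb5
    have e6 := enc4_spec (v 6) hb6
    have e7 := enc4_spec (v 7) hb7
    rw [e1.2, e2.2, e3.2, e4.2, e5.2, e6.2, e7.2] at hs
    rw [e1.1, e2.1, e3.1, e4.1, e5.1, e6.1, e7.1] at hx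
    simp only [tup]
    rw [hx0, e1.1, e2.1, e3.1, e4.1, e5.1, e6.1, e7.1]
    exact DF3 (enc4 (v 1)) (enc4 (v 2)) (enc4 (v 3)) (enc4 (v 4)) (enc4 (v 5)) (enc4 (v 6)) (enc4 (v 7)) hx hs
  · omega
  · omega
  · linarith


def iot (v : V) : V := fun i => 2 * hh i - v i

lemma iotc0 (v : V) : iot v 0 = 6 - v 0 := by
  show 2 * hh 0 - v 0 = _
  rw [show hh 0 = 3 from by decide]
  ring

lemma iotc1 (v : V) : iot v 1 = -2 - v 1 := by
  show 2 * hh 1 - v 1 = _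
  rw [show hh 1 = -1 from by decide]
  ring

lemma iotc2 (v : V) : iot v 2 = -2 - v 2 := by
  show 2 * hh 2 - v 2 = _
  rw [show hh 2 = -1 from by decide]
  ring

lemma iotc3 (v : V) : iot v 3 = -2 - v 3 := by
  show 2 * hh 3 - v 3 = _
  rw [show hh 3 = -1 from by decide]
  ring

lemma iotc4 (v : V) : iot v 4 = -2 - v 4 := by
  show 2 * hh 4 - v 4 = _
  rw [show hh 4 = -1 from by decide]
  ring

lemma iotc5 (v : V) : iot v 5 = -2 - v 5 := by
  show 2 * hh 5 - v 5 = _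
  rw [show hh 5 = -1 from by decide]
  ring

lemma iotc6 (v : V) : iot v 6 = -2 - v 6 := by
  show 2 * hh 6 - v 6 = _
  rw [show hh 6 = -1 from by decide]
  ring

lemma iotc7 (v : V) : iot v 7 = -2 - v 7 := by
  show 2 * hh 7 - v 7 = _
  rw [show hh 7 = -1 from by decide]
  ring

lemma iotF (v : V) (hv : v ∈ F) : iot v ∈ F := by
  obtain ⟨h1, h2⟩ := hv
  rw [Bexpl] at h1
  rw [Bh] at h2
  constructor
  · rw [Bexpl, iotc0, iotc1, iotc2, iotc3, iotc4, iotc5, iotc6, iotc7]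
    linarith [h1, h2]
  · rw [Bh, iotc0, iotc1, iotc2, iotc3, iotc4, iotc5, iotc6, iotc7]
    linarith [h2]

def negT (t : T) : T := (6 - t.1, -2 - t.2.1, -2 - t.2.2.1, -2 - t.2.2.2.1, -2 - t.2.2.2.2.1,
  -2 - t.2.2.2.2.2.1, -2 - t.2.2.2.2.2.2.1, -2 - t.2.2.2.2.2.2.2)

lemma tupIot (v : V) : tup (iot v) = negT (tup v) := by
  simp only [tup, negT]
  rw [iotc0, iotc1, iotc2, iotc3, iotc4, iotc5, iotc6, iotc7]

lemma negT_invol (t : T) : negT (negT t) = t := by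
  obtain ⟨a, b, c, d, e, f, g, h⟩ := t
  simp only [negT, Prod.mk.injEq]
  omega

lemma D45 : ∀ t ∈ Flist123, negT t ∈ Flist := by decide

lemma DFsub : ∀ t ∈ Flist123, t ∈ Flist := by decide

set_option maxHeartbeats 1600000 in
lemma structF (v : V) (hv : v ∈ F) : tup v ∈ Flist := by
  have h2 : B v hh = 2 := hv.2
  rw [Bh] at h2
  have h1 : B v v = 0 := hv.1
  rw [Bexpl] at h1
  have hd2 : (v 1 + v 2 + v 3 + v 4 + v 5 + v 6 + v 7) * (v 1 + v 2 + v 3 + v 4 + v 5 + v 6 + v 7) = (2 - 3 * v 0) * (2 - 3 * v 0) := by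
    have e : v 1 + v 2 + v 3 + v 4 + v 5 + v 6 + v 7 = 2 - 3 * v 0 := by linarith
    rw [e]
  have hcs : v 0 * v 0 ≤ 6 * v 0 - 2 := by
    linarith [sq_nonneg (v 1 - v 2), sq_nonneg (v 1 - v 3), sq_nonneg (v 1 - v 4), sq_nonneg (v 1 - v 5), sq_nonneg (v 1 - v 6), sq_nonneg (v 1 - v 7), sq_nonneg (v 2 - v 3), sq_nonneg (v 2 - v 4), sq_nonneg (v 2 - v 5), sq_nonneg (v 2 - v 6), sq_nonneg (v 2 - v 7), sq_nonneg (v 3 - v 4), sq_nonneg (v 3 - v 5), sq_nonneg (v 3 - v 6), sq_nonneg (v 3 - v 7), sq_nonneg (v 4 - v 5), sq_nonneg (v 4 - v 6), sq_nonneg (v 4 - v 7), sq_nonneg (v 5 - v 6), sq_nonneg (v 5 - v 7), sq_nonneg (v 6 - v 7), hd2, h1]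
  have hbig : v 0 ≤ 3 ∨ 4 ≤ v 0 := by omega
  rcases hbig with hsm | hlg
  · exact DFsub _ (structFcore v hv hsm)
  · have hw := iotF v hv
    have h3w : iot v 0 ≤ 3 := by
      rw [iotc0]
      rcases v0F (v 0) with ⟨hx0, hs0⟩ | ⟨hx0, hs0⟩ | ⟨hx0, hs0⟩ | ⟨hx0, hs0⟩ | ⟨hx0, hs0⟩ | hb <;> omega
    have hmem := structFcore _ hw h3w
    have hres := D45 _ hmem
    rwa [tupIot, negT_invol] at hres

def sols (t : T) : List T := Llist.filter (fun a => decide (Bt a t = 0))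

lemma D2 : ∀ t ∈ Flist, (sols t).length = 12 := by decide

lemma Lnodup : Llist.Nodup := by decide

lemma Lall : ∀ t ∈ Llist, B (fromTup t) (fromTup t) = -1 ∧ B (fromTup t) hh = 1 := by decide

def solsV (v : V) : Finset V := (sols (tup v)).toFinset.image fromTup

lemma mem_solsV (v : V) (hv : v ∈ F) (a : V) : a ∈ solsV v ↔ a ∈ L ∧ v - a ∈ L := by
  constructor
  · intro h
    rw [solsV] at h
    obtain ⟨t, ht, rfl⟩ := Finset.mem_image.mp h
    rw [List.mem_toFinset, sols, List.mem_filter] at ht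
    obtain ⟨htL, htB⟩ := ht
    have haL : fromTup t ∈ L := ⟨(Lall t htL).1, (Lall t htL).2⟩
    have hB0 : B (fromTup t) v = 0 := by
      have hb' : Bt (tup (fromTup t)) (tup v) = 0 := of_decide_eq_true htB
      rwa [Btc] at hb'
    refine ⟨haL, ?_, ?_⟩
    · rw [Bsub, hv.1, hB0, haL.1]
      ring
    · rw [Bsubh, hv.2, haL.2]
      norm_num
  · rintro ⟨haL, hvaL⟩
    have hB0 : B a v = 0 := by
      have h' := hvaL.1
      rw [Bsub] at h'
      have h1 := haL.1
      have h2 := hv.1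
      linarith
    rw [solsV]
    refine Finset.mem_image.mpr ⟨tup a, ?_, fromTup_tup a⟩
    rw [List.mem_toFinset, sols, List.mem_filter]
    refine ⟨structL a haL, decide_eq_true ?_⟩
    rw [Btc]
    exact hB0

/-- for every v ∈ F there are exactly 6 unordered pairs {a,b} of distinct
elements of L with a + b = v; every such pair satisfies ⟨a,b⟩ = 1, and the 12 elements
occurring in these 6 pairs are pairwise distinct. -/
theorem stmt6 : ∀ v ∈ F,
    {s : Finset V | s.card = 2 ∧ ↑s ⊆ L ∧ ∑ x ∈ s, x = v}.ncard = 6 ∧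
    (∀ a ∈ L, ∀ b ∈ L, a ≠ b → a + b = v → B a b = 1) ∧
    {a : V | ∃ s : Finset V, (s.card = 2 ∧ ↑s ⊆ L ∧ ∑ x ∈ s, x = v) ∧ a ∈ s}.ncard = 12 := by
  intro v hv
  have hv1 : B v v = 0 := hv.1
  have hmemF := structF v hv
  have hlen := D2 (tup v) hmemF
  have hnodup : (sols (tup v)).Nodup := Lnodup.filter _
  have hcardV : (solsV v).card = 12 := by
    rw [solsV, Finset.card_image_of_injective _ fromTup_inj, List.toFinset_card_of_nodup hnodup, hlen]
  have hsymm : ∀ a ∈ solsV v, v - a ∈ solsV v := by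
    intro a ha
    rw [mem_solsV v hv] at ha ⊢
    refine ⟨ha.2, ?_⟩
    rw [show v - (v - a) = a from by ring]
    exact ha.1
  have hne : ∀ a ∈ solsV v, a ≠ v - a := by
    intro a ha heq
    have haL : a ∈ L := ((mem_solsV v hv a).mp ha).1
    have hveq : a + a = v := eq_sub_iff_add_eq.mp heq
    have h4 := Badd a a
    rw [hveq, hv1, haL.1] at h4
    linarith
  have hSP : {s : Finset V | s.card = 2 ∧ ↑s ⊆ L ∧ ∑ x ∈ s, x = v} = ↑((solsV v).image (fun a => ({a, v - a} : Finset V))) := by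
    ext s
    simp only [Set.mem_setOf_eq, Finset.mem_coe]
    constructor
    · rintro ⟨hc2, hsub, hsum⟩
      obtain ⟨a, b, hab, rfl⟩ := Finset.card_eq_two.mp hc2
      have ha : a ∈ L := hsub (by simp)
      have hb : b ∈ L := hsub (by simp)
      rw [Finset.sum_pair hab] at hsum
      have hbeq : b = v - a := by rw [← hsum]; ring
      subst hbeq
      exact Finset.mem_image_of_mem _ ((mem_solsV v hv a).mpr ⟨ha, hb⟩)
    · intro hs
      obtain ⟨a, ha, rfl⟩ := Finset.mem_image.mp hs
      have hm := (mem_solsV v hv a).mp ha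
      have hne' := hne a ha
      refine ⟨Finset.card_pair hne', ?_, ?_⟩
      · intro x hx
        rcases Finset.mem_insert.mp hx with rfl | hx'
        · exact hm.1
        · rw [Finset.mem_singleton.mp hx']
          exact hm.2
      · rw [Finset.sum_pair hne']
        ring
  have hPcard : ((solsV v).image (fun a => ({a, v - a} : Finset V))).card = 6 := by
    have hkey := Finset.card_eq_sum_card_image (fun a => ({a, v - a} : Finset V)) (solsV v)
    have hfib : ∀ s ∈ (solsV v).image (fun a => ({a, v - a} : Finset V)),
        ((solsV v).filter (fun a => ({a, v - a} : Finset V) = s)).card = 2 := by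
      intro s hs
      obtain ⟨a₀, ha₀, rfl⟩ := Finset.mem_image.mp hs
      have hfe : (solsV v).filter (fun a => ({a, v - a} : Finset V) = {a₀, v - a₀}) = {a₀, v - a₀} := by
        ext x
        simp only [Finset.mem_filter, Finset.mem_insert, Finset.mem_singleton]
        constructor
        · rintro ⟨hxs, hpair⟩
          have hx : x ∈ ({a₀, v - a₀} : Finset V) := by
            rw [← hpair]
            exact Finset.mem_insert_self _ _
          simpa using hx
        · rintro (rfl | rfl)
          · exact ⟨ha₀, rfl⟩
          · refine ⟨hsymm a₀ ha₀, ?_⟩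
            rw [show v - (v - a₀) = a₀ from by ring]
            exact Finset.pair_comm _ _
      rw [hfe]
      exact Finset.card_pair (hne a₀ ha₀)
    rw [Finset.sum_congr rfl hfib, Finset.sum_const, smul_eq_mul, hcardV] at hkey
    omega
  refine ⟨?_, ?_, ?_⟩
  · rw [hSP, Set.ncard_coe_finset, hPcard]
  · intro a ha b hb hne' hab
    have h4 := Badd a b
    rw [hab, hv1, ha.1, hb.1] at h4
    linarith
  · have hSE : {a : V | ∃ s : Finset V, (s.card = 2 ∧ ↑s ⊆ L ∧ ∑ x ∈ s, x = v) ∧ a ∈ s} = ↑(solsV v) := by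
      ext a
      simp only [Set.mem_setOf_eq, Finset.mem_coe]
      constructor
      · rintro ⟨s, hcond, has⟩
        have hsP : s ∈ ((solsV v).image (fun a => ({a, v - a} : Finset V))) := by
          have : s ∈ {s : Finset V | s.card = 2 ∧ ↑s ⊆ L ∧ ∑ x ∈ s, x = v} := hcond
          rw [hSP] at this
          exact this
        obtain ⟨a₀, ha₀, rfl⟩ := Finset.mem_image.mp hsP
        rcases Finset.mem_insert.mp has with rfl | h'
        · exact ha₀
        · rw [Finset.mem_singleton.mp h']
          exact hsymm a₀ ha₀
      · intro ha
        have hm := (mem_solsV v hv a).mp ha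
        have hne' := hne a ha
        refine ⟨{a, v - a}, ⟨Finset.card_pair hne', ?_, ?_⟩, Finset.mem_insert_self _ _⟩
        · intro x hx
          rcases Finset.mem_insert.mp hx with rfl | hx'
          · exact hm.1
          · rw [Finset.mem_singleton.mp hx']
            exact hm.2
        · rw [Finset.sum_pair hne']
          ring
    rw [hSE, Set.ncard_coe_finset, hcardV]
end

section
/- The group G acts transitively on F, and hence also transitively on the 63-element quotient set F̄ = F/⟨ι⟩. -/
/-!
Write `v = (a; y₁, …, y₇)`, so that `v ∈ F` means `∑ yᵢ = 2 - 3a` and `∑ yᵢ² = a²`. Cauchy–Schwarz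
gives `a ≥ 1` and `yᵢ ≤ 0`. Permutations of the `yᵢ` lie in `G`, so we may assume `y₁ ≤ ⋯ ≤ y₇`. If
`a = 1`, then `v = (1; -1, 0, …, 0)`. If `a ≥ 2`, Noether's inequality `y₁ + y₂ + y₃ < -a` shows that
the reflection in the root `(1; -1, -1, -1, 0, 0, 0, 0)`, which is orthogonal to `h` (the quadratic
Cremona transformation), strictly lowers `a`. Hence every element of `F` is `G`-equivalent to
`(1; -1, 0, …, 0)`, and since `G` commutes with `ι` it also permutes the `ι`-orbits transitively.
-/

lemma B_comm (v w : V) : B v w = B w v := by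
  simp only [B, mul_comm]

lemma B_add_left (u v w : V) : B (u + v) w = B u w + B v w := by
  simp only [B, Pi.add_apply, add_mul, Finset.sum_add_distrib]
  ring

lemma B_smul_left (c : ℤ) (v w : V) : B (c • v) w = c • B v w := by
  simp only [B, Pi.smul_apply, smul_eq_mul, mul_assoc, ← Finset.mul_sum]
  ring

def Bform : LinearMap.BilinForm ℤ V :=
  LinearMap.mk₂ ℤ B B_add_left B_smul_left
    (fun u v w => by rw [B_comm, B_add_left, B_comm v, B_comm w])
    (fun c v w => by rw [B_comm, B_smul_left, B_comm])

@[simp] lemma Bform_apply (v w : V) : Bform v w = B v w := rfl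

lemma hh_succ (i : Fin 7) : hh i.succ = -1 := by
  fin_cases i <;> rfl

lemma B_hh (v : V) : B v hh = 3 * v 0 + ∑ i : Fin 7, v i.succ := by
  simp only [B, hh_succ, mul_neg_one, Finset.sum_neg_distrib, show hh 0 = 3 from rfl]
  ring

lemma mem_F_iff {v : V} :
    v ∈ F ↔ ∑ i : Fin 7, v i.succ = 2 - 3 * v 0 ∧ ∑ i : Fin 7, v i.succ ^ 2 = v 0 ^ 2 := by
  simp only [F, Set.mem_ofPred_eq, B_hh]
  simp only [B, sq]
  constructor <;> rintro ⟨h₁, h₂⟩ <;> constructor <;> linarith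

lemma mem_F_of_mem_G {g : V ≃ₗ[ℤ] V} (hg : g ∈ G) {v : V} (hv : v ∈ F) : g v ∈ F := by
  refine ⟨?_, ?_⟩
  · rw [hg.1]; exact hv.1
  · rw [← hg.2, hg.1]; exact hv.2

lemma map_iota_of_mem_G {g : V ≃ₗ[ℤ] V} (hg : g ∈ G) (v : V) : g (iota v) = iota (g v) := by
  rw [iota, iota, map_sub, map_smul, hg.2, ← hg.1 v hh, hg.2]

def tailPerm (σ : Equiv.Perm (Fin 7)) : V ≃ₗ[ℤ] V :=
  LinearEquiv.funCongrLeft ℤ ℤ (Equiv.Perm.decomposeFin.symm (0, σ))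

@[simp] lemma tailPerm_apply_zero (σ : Equiv.Perm (Fin 7)) (v : V) : tailPerm σ v 0 = v 0 := by
  simp [tailPerm, LinearEquiv.funCongrLeft_apply]

@[simp] lemma tailPerm_apply_succ (σ : Equiv.Perm (Fin 7)) (v : V) (i : Fin 7) :
    tailPerm σ v i.succ = v (σ i).succ := by
  simp [tailPerm, LinearEquiv.funCongrLeft_apply]

lemma tailPerm_mem_G (σ : Equiv.Perm (Fin 7)) : tailPerm σ ∈ G := by
  refine ⟨fun v w => ?_, funext fun j => ?_⟩
  · simp only [B, tailPerm_apply_zero, tailPerm_apply_succ]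
    rw [Equiv.sum_comp σ fun i => v i.succ * w i.succ]
  · cases j using Fin.cases with
    | zero => exact tailPerm_apply_zero σ hh
    | succ i => rw [tailPerm_apply_succ, hh_succ, hh_succ]

def rootReflection (r : V) (hr : B r r = -2) : V ≃ₗ[ℤ] V :=
  Module.reflection (x := r) (f := -Bform r) (by simp [hr])

lemma rootReflection_apply {r : V} (hr : B r r = -2) (v : V) :
    rootReflection r hr v = v + B r v • r := by
  simp [rootReflection, Module.reflection_apply, sub_eq_add_neg]

lemma rootReflection_mem_G {r : V} (hr : B r r = -2) (hrh : B r hh = 0) :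
    rootReflection r hr ∈ G := by
  refine ⟨fun v w => ?_, ?_⟩
  · change Bform (rootReflection r hr v) (rootReflection r hr w) = Bform v w
    simp only [rootReflection_apply, map_add, map_smul, LinearMap.add_apply, LinearMap.smul_apply,
      Bform_apply, smul_eq_mul, hr, B_comm v r]
    ring
  · rw [rootReflection_apply, hrh, zero_smul, add_zero]

lemma one_le_of_mem_F {v : V} (hv : v ∈ F) : 1 ≤ v 0 := by
  obtain ⟨hsum, hsq⟩ := mem_F_iff.1 hv
  have hcs := sq_sum_le_card_mul_sum_sq (s := Finset.univ) (f := fun i : Fin 7 => v i.succ)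
  rw [hsum, hsq, Finset.card_univ, Fintype.card_fin, Nat.cast_ofNat] at hcs
  nlinarith

lemma succ_nonpos_of_mem_F {v : V} (hv : v ∈ F) (j : Fin 7) : v j.succ ≤ 0 := by
  obtain ⟨hsum, hsq⟩ := mem_F_iff.1 hv
  have hcs :=
    sq_sum_le_card_mul_sum_sq (s := Finset.univ.erase j) (f := fun i : Fin 7 => v i.succ)
  rw [← Finset.add_sum_erase _ _ (Finset.mem_univ j)] at hsum hsq
  rw [Finset.card_erase_of_mem (Finset.mem_univ j), Finset.card_univ, Fintype.card_fin,
    eq_sub_of_add_eq' hsum, eq_sub_of_add_eq' hsq] at hcs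
  norm_num at hcs
  have ha := one_le_of_mem_F hv
  by_contra! hpos
  nlinarith [mul_nonneg (by linarith : (0 : ℤ) ≤ v 0) (by linarith : (0 : ℤ) ≤ v j.succ - 1),
    mul_nonneg hpos.le (by linarith : (0 : ℤ) ≤ v j.succ - 1), sq_nonneg (v 0 - 1)]

theorem noether_inequality {a : ℤ} {y : Fin 7 → ℤ} (hy : Monotone y) (hnonpos : ∀ i, y i ≤ 0)
    (hsum : ∑ i, y i = 2 - 3 * a) (hsq : ∑ i, y i ^ 2 = a ^ 2) (ha : 2 ≤ a) :
    y 0 + y 1 + y 2 < -a := by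
  have hy0 : -a ≤ y 0 := by
    have hsq0 : y 0 ^ 2 ≤ a ^ 2 :=
      hsq ▸ Finset.single_le_sum (fun i _ => sq_nonneg (y i)) (Finset.mem_univ 0)
    nlinarith
  have htail : ∀ i, 3 ≤ i → y i * (y i - y 2) ≤ 0 := fun i hi =>
    mul_nonpos_of_nonpos_of_nonneg (hnonpos i) (sub_nonneg.2 (hy (le_trans (by decide) hi)))
  have hhead : ∀ i, i ≤ 2 → y i * (y i - y 2) ≤ a * (y 2 - y i) := fun i hi => by
    nlinarith [mul_nonpos_of_nonpos_of_nonneg (sub_nonpos.2 (hy hi))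
      (by linarith [hy (Fin.zero_le i)] : 0 ≤ y i + a)]
  rw [Fin.sum_univ_seven] at hsum hsq
  -- `∑ i, y i * (y i - y 2) = a ^ 2 - y 2 * (2 - 3 * a)`,
  -- and each term of the sum is bounded by `htail` or `hhead`.
  have hkey : a * (a + (y 0 + y 1 + y 2)) ≤ 2 * y 2 := by
    have hsum₂ := congrArg (y 2 * ·) hsum
    linarith [htail 3 (by decide), htail 4 (by decide), htail 5 (by decide), htail 6 (by decide),
      hhead 0 (by decide), hhead 1 (by decide)]
  by_contra! hS
  have hy2 : y 2 = 0 := le_antisymm (hnonpos 2) (by nlinarith)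
  have hzero : ∀ i, 2 ≤ i → y i = 0 := fun i hi => le_antisymm (hnonpos i) (hy2 ▸ hy hi)
  rw [hzero 3 (by decide), hzero 4 (by decide), hzero 5 (by decide), hzero 6 (by decide), hy2]
    at hsum
  linarith

lemma exists_mem_G_tail_monotone (v : V) :
    ∃ g ∈ G, g v 0 = v 0 ∧ Monotone fun i : Fin 7 => g v i.succ :=
  ⟨tailPerm (Tuple.sort fun i => v i.succ), tailPerm_mem_G _, tailPerm_apply_zero _ v,
    fun i j hij => by
      simp only [tailPerm_apply_succ]
      exact Tuple.monotone_sort (fun i => v i.succ) hij⟩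

lemma eq_of_monotone_of_nonpos_of_sum_eq_neg_one {y : Fin 7 → ℤ} (hy : Monotone y)
    (hnonpos : ∀ i, y i ≤ 0) (hsum : ∑ i, y i = -1) : y = ![-1, 0, 0, 0, 0, 0, 0] := by
  have hle : ∀ i, y 0 ≤ y i := fun i => hy (Fin.zero_le i)
  simp only [Fin.forall_fin_succ, Fin.isValue, Fin.succ_zero_eq_one, Fin.succ_one_eq_two,
    Fin.reduceSucc, IsEmpty.forall_iff, and_true, le_refl, true_and] at hnonpos hle
  rw [Fin.sum_univ_seven] at hsum
  funext i
  fin_cases i <;>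
    simp only [Fin.zero_eta, Fin.mk_one, Fin.reduceFinMk, Fin.isValue, Matrix.cons_val_zero,
      Matrix.cons_val_one, Matrix.cons_val] <;>
    omega

def fBase : V := ![1, -1, 0, 0, 0, 0, 0, 0]

lemma eq_fBase_of_tail_monotone {v : V} (hv : v ∈ F) (h0 : v 0 = 1)
    (hmono : Monotone fun i : Fin 7 => v i.succ) : v = fBase := by
  have htail := eq_of_monotone_of_nonpos_of_sum_eq_neg_one hmono (succ_nonpos_of_mem_F hv)
    (by rw [(mem_F_iff.1 hv).1, h0]; norm_num)
  funext j
  cases j using Fin.cases with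
  | zero => exact h0
  | succ i => exact congrFun htail i

def cremonaRoot : V := ![1, -1, -1, -1, 0, 0, 0, 0]

lemma B_cremonaRoot (v : V) : B cremonaRoot v = v 0 + v 1 + v 2 + v 3 := by
  simp only [B, cremonaRoot, Fin.sum_univ_seven, Fin.succ_zero_eq_one, Fin.succ_one_eq_two,
    Fin.reduceSucc, Matrix.cons_val_zero, Matrix.cons_val_one, Matrix.cons_val, one_mul, neg_mul,
    zero_mul, add_zero]
  ring

lemma B_cremonaRoot_self : B cremonaRoot cremonaRoot = -2 := by decide

lemma B_cremonaRoot_hh : B cremonaRoot hh = 0 := by decide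

lemma rootReflection_cremonaRoot_apply_zero (v : V) :
    rootReflection cremonaRoot B_cremonaRoot_self v 0 = 2 * v 0 + (v 1 + v 2 + v 3) := by
  rw [rootReflection_apply, Pi.add_apply, Pi.smul_apply, smul_eq_mul, B_cremonaRoot]
  change v 0 + (v 0 + v 1 + v 2 + v 3) * 1 = _
  ring

theorem exists_mem_G_apply_eq_fBase (v : V) (hv : v ∈ F) : ∃ g ∈ G, g v = fBase := by
  obtain ⟨σ, hσ, hσ0, hmono⟩ := exists_mem_G_tail_monotone v
  have hw : σ v ∈ F := mem_F_of_mem_G hσ hv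
  rcases (one_le_of_mem_F hv).eq_or_lt with h1 | h2
  · exact ⟨σ, hσ, eq_fBase_of_tail_monotone hw (hσ0.trans h1.symm) hmono⟩
  · have hs := rootReflection_mem_G B_cremonaRoot_self B_cremonaRoot_hh
    obtain ⟨hsum, hsq⟩ := mem_F_iff.1 hw
    have hlt := noether_inequality hmono (succ_nonpos_of_mem_F hw) hsum hsq (hσ0 ▸ h2)
    simp only [Fin.succ_zero_eq_one, Fin.succ_one_eq_two, Fin.reduceSucc] at hlt
    have hdec : rootReflection cremonaRoot B_cremonaRoot_self (σ v) 0 < v 0 := by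
      rw [rootReflection_cremonaRoot_apply_zero]
      omega
    obtain ⟨g, hg, hgv⟩ := exists_mem_G_apply_eq_fBase _ (mem_F_of_mem_G hs hw)
    exact ⟨g * _ * σ, mul_mem (mul_mem hg hs) hσ, hgv⟩
termination_by (v 0).toNat
decreasing_by omega

theorem exists_mem_G_apply_eq {v w : V} (hv : v ∈ F) (hw : w ∈ F) : ∃ g ∈ G, g v = w := by
  obtain ⟨gv, hgv, hv'⟩ := exists_mem_G_apply_eq_fBase v hv
  obtain ⟨gw, hgw, hw'⟩ := exists_mem_G_apply_eq_fBase w hw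
  refine ⟨gw⁻¹ * gv, mul_mem (inv_mem hgw) hgv, ?_⟩
  rw [LinearEquiv.mul_apply, hv', ← hw']
  exact gw.symm_apply_apply w

/-- G acts transitively on F, hence also on the quotient F̄. -/
theorem stmt10 :
    (∀ v ∈ F, ∀ w ∈ F, ∃ g ∈ G, g v = w) ∧
    (∀ p ∈ Fbar, ∀ q ∈ Fbar, ∃ g ∈ G, (fun x => g x) '' p = q) := by
  refine ⟨fun v hv w hw => exists_mem_G_apply_eq hv hw, ?_⟩
  rintro _ ⟨v, hv, rfl⟩ _ ⟨w, hw, rfl⟩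
  obtain ⟨g, hg, rfl⟩ := exists_mem_G_apply_eq hv hw
  exact ⟨g, hg, by rw [Set.image_pair, map_iota_of_mem_G hg]⟩
end
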